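/- Let C be a unital C*-algebra, s ∈ C a partial isometry with s*s = p and ss* ≤ e for projections p, e ∈ C. If x ∈ C commutes with s and with s*, then ‖p x p‖ ≤ ‖e x e‖. -/

import Mathlib

/-!
Since `s s⋆ ≤ e` with `e` a projection, `e` fixes the range of `s`: `e s = s` and `s⋆ e = s⋆`.
As `x` commutes with `s` and `s s⋆ s = s`, this gives `p x p = s⋆ x s = s⋆ (e x e) s`,
and a partial isometry has norm at most one.
-/

theorem isStarProjection_star_mul_self_of_mul_star_mul_self {R : Type*} [Semigroup R] [StarMul R]
    {s : R} (hs : s * star s * s = s) : IsStarProjection (star s * s) where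
  isIdempotentElem := by
    rw [IsIdempotentElem, ← mul_assoc, mul_assoc (star s) s, mul_assoc, hs]
  isSelfAdjoint := IsSelfAdjoint.star_mul_self s

section Norm

variable {E : Type*} [NonUnitalNormedRing E] [StarRing E] [CStarRing E]

theorem norm_le_one_of_mul_star_mul_self {s : E} (hs : s * star s * s = s) : ‖s‖ ≤ 1 := by
  have h := (isStarProjection_star_mul_self_of_mul_star_mul_self hs).norm_le
  rw [CStarRing.norm_star_mul_self] at h
  nlinarith [norm_nonneg s]

theorem norm_star_mul_mul_le_of_norm_le_one {a : E} (ha : ‖a‖ ≤ 1) (b : E) :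
    ‖star a * b * a‖ ≤ ‖b‖ :=
  calc ‖star a * b * a‖ ≤ ‖star a‖ * ‖b‖ * ‖a‖ := norm_mul₃_le
    _ ≤ 1 * ‖b‖ * 1 := by gcongr; rwa [norm_star]
    _ = ‖b‖ := by ring

end Norm

theorem IsStarProjection.mul_eq_self_of_mul_star_le {A : Type*} [NonUnitalCStarAlgebra A]
    [PartialOrder A] [StarOrderedRing A] {a e : A} (he : IsStarProjection e)
    (h : a * star a ≤ e) : e * a = a := by
  obtain ⟨hright, hleft⟩ := he.mul_right_and_mul_left_of_nonneg_of_le (mul_star_self_nonneg a) h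
  have hzero : (a - e * a) * star (a - e * a) = 0 :=
    calc (a - e * a) * star (a - e * a)
        = a * star a - a * star a * e - e * (a * star a) + e * (a * star a) * e := by
          simp only [star_sub, star_mul, he.isSelfAdjoint.star_eq]; noncomm_ring
      _ = 0 := by rw [hleft, hright]; abel
  exact (sub_eq_zero.mp ((CStarRing.mul_star_self_eq_zero_iff _).mp hzero)).symm

theorem stmt2_general {C : Type*} [CStarAlgebra C] [PartialOrder C] [StarOrderedRing C]
    (s p e x : C)
    (hs : s * star s * s = s)
    (hp : star s * s = p)
    (he_proj : IsIdempotentElem e) (he_sa : star e = e)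
    (hle : s * star s ≤ e)
    (hxs : x * s = s * x) :
    ‖p * x * p‖ ≤ ‖e * x * e‖ := by
  have hes : e * s = s := IsStarProjection.mul_eq_self_of_mul_star_le ⟨he_proj, he_sa⟩ hle
  have hse : star s * e = star s := by simpa [he_sa] using congr(star $hes)
  have hpxp : p * x * p = star s * (e * x * e) * s := by
    subst hp
    calc star s * s * x * (star s * s) = star s * (x * s) * (star s * s) := by
          rw [hxs]; noncomm_ring
      _ = star s * x * (s * star s * s) := by noncomm_ring
      _ = star s * e * x * (e * s) := by rw [hs, hse, hes]
      _ = star s * (e * x * e) * s := by noncomm_ring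
  rw [hpxp]
  exact norm_star_mul_mul_le_of_norm_le_one (norm_le_one_of_mul_star_mul_self hs) _

/-- In a unital C*-algebra, if `s` is a partial isometry with
`s* s = p` and `s s* ≤ e` for projections `p, e`, and `x` commutes with `s` and
`s*`, then `‖p x p‖ ≤ ‖e x e‖`. -/
theorem stmt2 {C : Type*} [CStarAlgebra C] [PartialOrder C] [StarOrderedRing C]
    (s p e x : C)
    (hs : s * star s * s = s)
    (hp : star s * s = p) (hp_proj : IsIdempotentElem p) (hp_sa : star p = p)
    (he_proj : IsIdempotentElem e) (he_sa : star e = e)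
    (hle : s * star s ≤ e)
    (hxs : x * s = s * x) (hxs' : x * star s = star s * x) :
    ‖p * x * p‖ ≤ ‖e * x * e‖ :=
  stmt2_general s p e x hs hp he_proj he_sa hle hxs
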